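/- In M[G₁][G₂] as in the Jech–Kunen model (CH holds, T is a normal ω₁-tree which is lim(ω₁)-properly pruned, and ℙ₃ = Fn(λ, 2, ω₁) is ω₁-closed there), forcing with ℙ₃ adds no new branches to T: if G₃ is ℙ₃-generic over M[G₁][G₂], then B(T) computed in M[G₁][G₂][G₃] equals B(T) computed in M[G₁][G₂]. -/

import Mathlib

open Set

/-- A (partial) node of the tree `2^{<ω₁}`: a set of ordinal–bit pairs,
    thought of as the graph of a partial function from ω₁ to `Bool`. -/
abbrev PNode : Type 1 := Set (Ordinal × Bool)

/-- The first uncountable ordinal ω₁. -/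
noncomputable def omega1 : Ordinal := (Cardinal.aleph 1).ord

/-- `s` is (the graph of) a partial function. -/
def IsFunl (s : PNode) : Prop :=
  ∀ ⦃o : Ordinal⦄ ⦃b b' : Bool⦄, (o, b) ∈ s → (o, b') ∈ s → b = b'

/-- Domain of a partial node. -/
def ndom (s : PNode) : Set Ordinal := {o | ∃ b, (o, b) ∈ s}

/-- An element of `2^{<ω₁}`: a function from a countable ordinal to `Bool`. -/
def IsNode (s : PNode) : Prop :=
  IsFunl s ∧ ∃ δ : Ordinal, δ < omega1 ∧ ndom s = Set.Iio δ

/-- Height (= length = domain) of a node. -/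
noncomputable def ht (s : PNode) : Ordinal := sInf {δ : Ordinal | ndom s = Set.Iio δ}

/-- Two nodes are compatible iff their union is (the graph of) a function,
    i.e. they have a common extension in `2^{<ω₁}`. -/
def Compat (s t : PNode) : Prop := IsFunl (s ∪ t)

/-- Restriction of a node below `β`. -/
def restrictNode (s : PNode) (β : Ordinal) : PNode := {p ∈ s | p.1 < β}

/-- A tree: a set of nodes of `2^{<ω₁}` containing the root `∅` and closed
    under restriction (initial segments), ordered by inclusion. -/
def IsTree (T : Set PNode) : Prop :=
  (∀ t ∈ T, IsNode t) ∧ (∅ : PNode) ∈ T ∧ ∀ t ∈ T, ∀ β : Ordinal, restrictNode t β ∈ T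

/-- The δ-th level `T_δ` of a tree. -/
def level (T : Set PNode) (δ : Ordinal) : Set PNode := {t ∈ T | ndom t = Set.Iio δ}

/-- `T↾δ`, the part of the tree of height `< δ`. -/
def restrictTree (T : Set PNode) (δ : Ordinal) : Set PNode := {t ∈ T | ht t < δ}

/-- A branch: a linearly ordered subset meeting every nonempty level. -/
def IsBranch (B T : Set PNode) : Prop :=
  B ⊆ T ∧ IsChain (· ⊆ ·) B ∧
    ∀ δ : Ordinal, (level T δ).Nonempty → (B ∩ level T δ).Nonempty

/-- An ω₁-tree: cardinality ω₁ and height ω₁. -/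
def IsOmega1Tree (T : Set PNode) : Prop :=
  IsTree T ∧ Cardinal.mk T = Cardinal.aleph 1 ∧ ∀ δ < omega1, (level T δ).Nonempty

/-- A normal tree: every node has at least two immediate successors and
    extensions to every higher level below ω₁. -/
def IsNormalTree (T : Set PNode) : Prop :=
  (∀ t ∈ T, ∃ s₁ ∈ T, ∃ s₂ ∈ T, t ⊆ s₁ ∧ t ⊆ s₂ ∧ s₁ ≠ s₂ ∧
      ndom s₁ = Set.Iio (ht t + 1) ∧ ndom s₂ = Set.Iio (ht t + 1)) ∧
  (∀ t ∈ T, ∀ δ : Ordinal, ht t < δ → δ < omega1 → ∃ t' ∈ level T δ, t ⊆ t')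

/-- Support of a tuple `F ∈ T^I`. -/
def supt {I : Type*} (F : I → PNode) : Set I := {i | F i ≠ ∅}

/-- `F ∈ T^I` (every coordinate a node of `T`; `∅` is the root of `T`). -/
def Tuple {I : Type*} (T : Set PNode) (F : I → PNode) : Prop := ∀ i, F i ∈ T

/-- The pointwise order `F ≼ G` on `T^I`. -/
def Tle {I : Type*} (F G : I → PNode) : Prop := ∀ i, F i ⊆ G i

/-- `f↾n` for `f ∈ 2^ω`: the first `n` values of `f`, as an element of `2^{<ω}`. -/
def restr (f : ℕ → Bool) (n : ℕ) : List Bool := List.ofFn fun k : Fin n => f k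

/-- Incomparability in `2^{<ω}`. -/
def ListIncomp (s t : List Bool) : Prop := ¬ s <+: t ∧ ¬ t <+: s

/-- `F` and `G` are completely incompatible. -/
def CompIncompat {I J : Type*} (F : I → PNode) (G : J → PNode) : Prop :=
  ∀ i ∈ supt F, ∀ j ∈ supt G, ¬ Compat (F i) (G j)

/-- A Cantor tree `{F_s : s ∈ 2^{<ω}}` of tuples: `s ⊆ t` iff `F_s ≼ F_t`. -/
def IsCantorSystem {I : Type*} (F : List Bool → I → PNode) : Prop :=
  ∀ s t : List Bool, (s <+: t ↔ Tle (F s) (F t))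

/-- Separated: incomparable indices yield completely incompatible tuples. -/
def Separated {I : Type*} (F : List Bool → I → PNode) : Prop :=
  ∀ s t : List Bool, ListIncomp s t → CompIncompat (F s) (F t)

/-- `F` is uniform at `δ`: every coordinate in the support has height `δ`. -/
def UniformAt {I : Type*} (F : I → PNode) (δ : Ordinal) : Prop :=
  ∀ i ∈ supt F, ndom (F i) = Set.Iio δ

/-- The Cantor tree `{F_s}` is uniformly cofinal in `(T↾δ)^I`. -/
def UnifCofinal {I : Type*} (F : List Bool → I → PNode) (δ : Ordinal) : Prop :=
  (∀ s : List Bool, ∃ δs < δ, UniformAt (F s) δs) ∧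
  ∀ i ∈ ⋃ s : List Bool, supt (F s), ∀ f : ℕ → Bool,
    (∀ n, i ∈ supt (F (restr f n))) → ∀ β < δ, ∃ n, β ≤ ht (F (restr f n) i)

/-- `T` is properly pruned in countable products at level `δ`. -/
def PrunedInProductsAt (T : Set PNode) (δ : Ordinal) : Prop :=
  ∀ F : List Bool → ℕ → PNode, (∀ s, Tuple T (F s)) → IsCantorSystem F →
    Separated F → UnifCofinal F δ →
    ∃ f g : ℕ → Bool,
      (∀ i ∈ ⋃ n : ℕ, supt (F (restr f n)), (⋃ n : ℕ, F (restr f n) i) ∈ level T δ) ∧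
      (∀ i ∈ ⋃ n : ℕ, supt (F (restr g n)), (⋃ n : ℕ, F (restr g n) i) ∉ level T δ)

/-- `T` is complete at level `δ`: every branch of `T↾δ` has its union in `T_δ`. -/
def CompleteAt (T : Set PNode) (δ : Ordinal) : Prop :=
  ∀ B : Set PNode, IsBranch B (restrictTree T δ) → ⋃₀ B ∈ level T δ

/-- `T` is `S`-properly pruned in countable products. -/
def SPrunedInProducts (T : Set PNode) (S : Set Ordinal) : Prop :=
  ∀ δ < omega1, Order.IsSuccLimit δ →
    (δ ∉ S → CompleteAt T δ) ∧ (δ ∈ S → PrunedInProductsAt T δ)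

/-- A Cantor subtree `{c_s : s ∈ 2^{<ω}}` of `T`. -/
def IsCantorSubtree (T : Set PNode) (c : List Bool → PNode) : Prop :=
  (∀ s, c s ∈ T) ∧ ∀ s t : List Bool, s <+: t ↔ c s ⊆ c t

/-- A Cantor subtree of `T` is cofinal in `T↾δ`. -/
def CofinalIn (c : List Bool → PNode) (δ : Ordinal) : Prop :=
  ∀ f : ℕ → Bool, ∀ β < δ, ∃ n : ℕ, β ≤ ht (c (restr f n))

/-- `T` is properly pruned at level `δ`. -/
def PrunedAt (T : Set PNode) (δ : Ordinal) : Prop :=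
  ∀ c : List Bool → PNode, IsCantorSubtree T c → CofinalIn c δ →
    ∃ f g : ℕ → Bool,
      (⋃ n : ℕ, c (restr f n)) ∈ level T δ ∧ (⋃ n : ℕ, c (restr g n)) ∉ level T δ

/-- `T` is `S`-properly pruned. -/
def SPruned (T : Set PNode) (S : Set Ordinal) : Prop :=
  ∀ δ < omega1, Order.IsSuccLimit δ → (δ ∉ S → CompleteAt T δ) ∧ (δ ∈ S → PrunedAt T δ)

/-- The forcing poset `ℙ(T, I, ω₁)`: members of `T^I` with countable support. -/
def Cond (T : Set PNode) (I : Type*) :=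
  {F : I → PNode // (∀ i, F i ∈ T) ∧ (supt F).Countable}

/-- The order of `ℙ(T, I, ω₁)`: `p ≤ q` iff `q ≼ p` pointwise. -/
def condLE {T : Set PNode} {I : Type*} (p q : Cond T I) : Prop := ∀ i, q.1 i ⊆ p.1 i
/-! Abstract forcing posets. `le p q` means "`p` extends (is stronger than) `q`". -/

section Poset

variable {P : Type*} (le : P → P → Prop)

/-- `D` is dense: every condition has an extension in `D`. -/
def DenseBelow (D : Set P) : Prop := ∀ p : P, ∃ d ∈ D, le d p

/-- `D` is open: downward closed under the forcing order. -/
def OpenBelow (D : Set P) : Prop := ∀ p d, d ∈ D → le p d → p ∈ D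

/-- `P` is ω₁-Baire: countable intersections of dense open sets are dense. -/
def Omega1Baire : Prop :=
  ∀ D : ℕ → Set P, (∀ n, DenseBelow le (D n) ∧ OpenBelow le (D n)) →
    DenseBelow le (⋂ n, D n)

/-- `P` is ω₁-closed: every countable descending chain has a lower bound. -/
def Omega1Closed : Prop :=
  ∀ c : ℕ → P, (∀ n, le (c (n + 1)) (c n)) → ∃ q : P, ∀ n, le q (c n)

end Poset

/-! A condition below which the name does not decide its branch splits into two extensions
forcing incompatible nodes. Iterating the splitting ω times, and extending to a common height
at every level, gives a Cantor tree of conditions `p_s` forcing nodes `t_s`, which is a Cantor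
subtree of `T` cofinal in `T↾δ` for the supremum `δ` of the heights. Pruning at `δ` gives a
branch `g` along which `⋃ t_{g↾n} ∉ T_δ`, while a lower bound of the `p_{g↾n}` forces a node of
`T_δ` extending every `t_{g↾n}`, so `⋃ t_{g↾n}` is that node. -/

lemma IsFunl.mono {s t : PNode} (h : s ⊆ t) (ht : IsFunl t) : IsFunl s :=
  fun _ _ _ h₁ h₂ => ht (h h₁) (h h₂)

lemma compat_of_subset {s u t : PNode} (hs : s ⊆ t) (hu : u ⊆ t) (ht : IsFunl t) :
    Compat s u :=
  IsFunl.mono (union_subset hs hu) ht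

lemma Compat.symm {s t : PNode} (h : Compat s t) : Compat t s := by
  rwa [Compat, union_comm]

lemma not_compat_mono {s s' t t' : PNode} (h : ¬ Compat s t) (hs : s ⊆ s') (ht : t ⊆ t') :
    ¬ Compat s' t' :=
  fun hc => h (IsFunl.mono (union_subset_union hs ht) hc)

lemma ndom_mono {s t : PNode} (h : s ⊆ t) : ndom s ⊆ ndom t :=
  fun _ ⟨b, hb⟩ => ⟨b, h hb⟩

lemma Compat.subset_of_ndom_subset {s t : PNode} (hc : Compat s t) (hd : ndom s ⊆ ndom t) :
    s ⊆ t := by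
  rintro ⟨o, b⟩ hob
  obtain ⟨b', hb'⟩ := hd ⟨b, hob⟩
  rwa [hc (mem_union_left _ hob) (mem_union_right _ hb')]

lemma ht_eq_of_ndom_eq {s : PNode} {δ : Ordinal} (h : ndom s = Iio δ) : ht s = δ := by
  have : {γ : Ordinal | ndom s = Iio γ} = {δ} := by
    ext γ
    simp [h, Iio_inj, eq_comm]
  rw [ht, this, csInf_singleton]

lemma iUnion_eq_of_subset {c : ℕ → PNode} {t : PNode} (ht : IsFunl t) (hc : ∀ n, c n ⊆ t)
    (hdom : ndom t ⊆ ⋃ n, ndom (c n)) : (⋃ n, c n) = t := by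
  refine (iUnion_subset hc).antisymm ?_
  rintro ⟨o, b⟩ hob
  obtain ⟨n, b', hb'⟩ := mem_iUnion.1 (hdom ⟨b, hob⟩)
  rw [ht (hc n hb') hob] at hb'
  exact mem_iUnion.2 ⟨n, hb'⟩

lemma omega1_pos : 0 < omega1 :=
  Cardinal.ord_pos.2 (Cardinal.aleph_pos 1)

lemma add_one_lt_omega1 {a : Ordinal} (h : a < omega1) : a + 1 < omega1 := by
  rw [← Order.succ_eq_add_one]
  exact (Cardinal.isSuccLimit_ord (Cardinal.aleph0_le_aleph 1)).succ_lt h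

lemma iSup_lt_omega1 {ι : Type} [Countable ι] {f : ι → Ordinal.{0}} (h : ∀ i, f i < omega1) :
    ⨆ i, f i < omega1 := by
  refine Ordinal.iSup_lt_of_lt_cof ?_ h
  rw [omega1, Cardinal.isRegular_aleph_one.cof_ord]
  exact Cardinal.mk_le_aleph0.trans_lt Cardinal.aleph0_lt_aleph_one

lemma isSuccLimit_iSup_of_strictMono {d : ℕ → Ordinal} (hd : StrictMono d) :
    Order.IsSuccLimit (⨆ n, d n) := by
  by_contra h
  obtain ⟨n, hn⟩ := exists_eq_ciSup_of_not_isSuccLimit Ordinal.bddAbove_of_small h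
  exact (hd n.lt_succ_self).not_ge (hn ▸ Ordinal.le_iSup d (n + 1))

lemma restr_length (f : ℕ → Bool) (n : ℕ) : (restr f n).length = n := by
  simp [restr]

lemma restr_succ (f : ℕ → Bool) (n : ℕ) : restr f (n + 1) = restr f n ++ [f n] := by
  rw [restr, List.ofFn_succ', List.concat_eq_append]
  rfl

section Forcing

variable {P : Type*}

/-- `fm p t` reads "`p ⊩ ť ∈ ḃ`" for a name `ḃ` of a cofinal branch of `2^{<ω₁}`. -/
structure IsCofinalBranchName (le : P → P → Prop) (fm : P → PNode → Prop) : Prop where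
  mono : ∀ p q t, le q p → fm p t → fm q t
  compat : ∀ p t t', fm p t → fm p t' → Compat t t'
  total : ∀ p, ∀ δ < omega1, ∃ q, le q p ∧ ∃ t, fm q t ∧ ndom t = Iio δ
  isNode : ∀ p t, fm p t → IsNode t

variable {le : P → P → Prop} {fm : P → PNode → Prop}

namespace IsCofinalBranchName

lemma subset_of_ndom_subset (hb : IsCofinalBranchName le fm) {p : P} {s t : PNode}
    (hs : fm p s) (ht : fm p t) (hd : ndom s ⊆ ndom t) : s ⊆ t :=
  (hb.compat p s t hs ht).subset_of_ndom_subset hd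

lemma exists_extension (hb : IsCofinalBranchName le fm) {q : P} {t : PNode} {ε γ : Ordinal}
    (hft : fm q t) (hε : ndom t = Iio ε) (hεγ : ε ≤ γ) (hγ : γ < omega1) :
    ∃ r, le r q ∧ ∃ u, fm r u ∧ ndom u = Iio γ ∧ t ⊆ u := by
  obtain ⟨r, hrq, u, hfu, hu⟩ := hb.total q γ hγ
  refine ⟨r, hrq, u, hfu, hu, hb.subset_of_ndom_subset (hb.mono q r t hrq hft) hfu ?_⟩
  rw [hε, hu]
  exact Iio_subset_Iio hεγ

lemma exists_uniform_extension (hb : IsCofinalBranchName le fm) {ι : Type} [Countable ι]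
    {q : ι → P} {t : ι → PNode} (hft : ∀ i, fm (q i) (t i)) {α : Ordinal} (hα : α < omega1) :
    ∃ γ, α < γ ∧ γ < omega1 ∧ ∃ (r : ι → P) (u : ι → PNode),
      ∀ i, le (r i) (q i) ∧ fm (r i) (u i) ∧ ndom (u i) = Iio γ ∧ t i ⊆ u i := by
  choose ε hε hdom using fun i => (hb.isNode _ _ (hft i)).2
  set γ := max (⨆ i, ε i) α + 1
  have hγ : γ < omega1 := add_one_lt_omega1 (max_lt (iSup_lt_omega1 hε) hα)
  have hεγ : ∀ i, ε i ≤ γ := fun i =>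
    ((Ordinal.le_iSup ε i).trans (le_max_left _ _)).trans (Order.le_succ _)
  choose r hr u hu using fun i => hb.exists_extension (hft i) (hdom i) (hεγ i) hγ
  exact ⟨γ, (le_max_right _ _).trans_lt (Order.lt_succ _), hγ, r, u, fun i => ⟨hr i, hu i⟩⟩

end IsCofinalBranchName

def Decides (le : P → P → Prop) (fm : P → PNode → Prop) (q : P) : Prop :=
  ∀ q₁ q₂ t₁ t₂, le q₁ q → le q₂ q → fm q₁ t₁ → fm q₂ t₂ → Compat t₁ t₂

structure SplittingScheme (le : P → P → Prop) (fm : P → PNode → Prop) where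
  cond : List Bool → P
  node : List Bool → PNode
  height : ℕ → Ordinal
  height_lt_omega1 : ∀ n, height n < omega1
  strictMono_height : StrictMono height
  forces : ∀ s, fm (cond s) (node s)
  ndom_node : ∀ s, ndom (node s) = Iio (height s.length)
  cond_append : ∀ s b, le (cond (s ++ [b])) (cond s)
  not_compat_append : ∀ s, ¬ Compat (node (s ++ [false])) (node (s ++ [true]))

/-- A level of the construction of a `SplittingScheme`. It is defined at every list, but only
the lists of the level's length matter. -/
structure SchemeLevel (P : Type*) where
  cond : List Bool → P
  node : List Bool → PNode
  height : Ordinal.{0}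

namespace SchemeLevel

def IsBelow (le : P → P → Prop) (fm : P → PNode → Prop) (p : P) (L : SchemeLevel P) : Prop :=
  L.height < omega1 ∧
    ∀ s, le (L.cond s) p ∧ fm (L.cond s) (L.node s) ∧ ndom (L.node s) = Iio L.height

def Splits (le : P → P → Prop) (L L' : SchemeLevel P) : Prop :=
  L.height < L'.height ∧
    ∀ s, (∀ b, le (L'.cond (s ++ [b])) (L.cond s)) ∧
      ¬ Compat (L'.node (s ++ [false])) (L'.node (s ++ [true]))

lemma exists_isBelow (hb : IsCofinalBranchName le fm) (p : P) :
    ∃ L : SchemeLevel P, L.IsBelow le fm p := by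
  obtain ⟨q, hq, t, hft, ht⟩ := hb.total p 0 omega1_pos
  exact ⟨⟨fun _ => q, fun _ => t, 0⟩, omega1_pos, fun _ => ⟨hq, hft, ht⟩⟩

lemma exists_splits (hb : IsCofinalBranchName le fm)
    (htrans : ∀ p q r, le p q → le q r → le p r) {p : P}
    (hsplit : ∀ q, le q p → ¬ Decides le fm q)
    {L : SchemeLevel P} (hL : L.IsBelow le fm p) :
    ∃ L' : SchemeLevel P, L'.IsBelow le fm p ∧ L.Splits le L' := by
  have hchildren : ∀ s, ∃ (q : Bool → P) (t : Bool → PNode), (∀ b, le (q b) (L.cond s)) ∧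
      (∀ b, fm (q b) (t b)) ∧ ¬ Compat (t false) (t true) := by
    intro s
    obtain ⟨q₁, q₂, t₁, t₂, h₁, h₂, hf₁, hf₂, hc⟩ := by
      simpa only [Decides, not_forall, Classical.not_imp, exists_prop] using
        hsplit (L.cond s) (hL.2 s).1
    exact ⟨fun b => bif b then q₂ else q₁, fun b => bif b then t₂ else t₁,
      Bool.forall_bool.2 ⟨h₁, h₂⟩, Bool.forall_bool.2 ⟨hf₁, hf₂⟩, hc⟩
  choose q t hq hft hc using hchildren
  -- the new level at `x = s ++ [b]` extends the child `(q s b, t s b)`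
  obtain ⟨γ, hLγ, hγ, r, u, hru⟩ := hb.exists_uniform_extension
    (ι := List Bool) (q := fun x => q x.dropLast (x.getLastD false))
    (fun x => hft _ _) hL.1
  refine ⟨⟨r, u, γ⟩, ⟨hγ, fun x => ⟨?_, (hru x).2.1, (hru x).2.2.1⟩⟩, hLγ, fun s => ⟨?_, ?_⟩⟩
  · exact htrans _ _ _ (hru x).1 (htrans _ _ _ (hq _ _) (hL.2 _).1)
  · intro b
    have h := (hru (s ++ [b])).1
    rw [List.dropLast_concat, List.getLastD_concat] at h
    exact htrans _ _ _ h (hq s b)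
  · exact not_compat_mono (hc s) (by simpa using (hru (s ++ [false])).2.2.2)
      (by simpa using (hru (s ++ [true])).2.2.2)

end SchemeLevel

lemma exists_splittingScheme (hb : IsCofinalBranchName le fm)
    (htrans : ∀ p q r, le p q → le q r → le p r) {p : P}
    (hsplit : ∀ q, le q p → ¬ Decides le fm q) : Nonempty (SplittingScheme le fm) := by
  obtain ⟨L₀, hL₀⟩ := SchemeLevel.exists_isBelow hb p
  have hstep (L : {L : SchemeLevel P // L.IsBelow le fm p}) :
      ∃ L' : {L' : SchemeLevel P // L'.IsBelow le fm p}, L.1.Splits le L'.1 := by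
    obtain ⟨L', hL', hsplits⟩ := SchemeLevel.exists_splits hb htrans hsplit L.2
    exact ⟨⟨L', hL'⟩, hsplits⟩
  choose next hnext using hstep
  set level : ℕ → {L : SchemeLevel P // L.IsBelow le fm p} := fun n => next^[n] ⟨L₀, hL₀⟩
  have hlevel (n : ℕ) : (level n).1.Splits le (level (n + 1)).1 := by
    simp only [level, Function.iterate_succ_apply']
    exact hnext _
  refine ⟨⟨fun s => (level s.length).1.cond s, fun s => (level s.length).1.node s,
    fun n => (level n).1.height, fun n => (level n).2.1,
    strictMono_nat_of_lt_succ fun n => (hlevel n).1, fun s => ((level _).2.2 s).2.1,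
    fun s => ((level _).2.2 s).2.2, fun s b => ?_, fun s => ?_⟩⟩
  · simpa only [List.length_append, List.length_singleton] using ((hlevel s.length).2 s).1 b
  · simpa only [List.length_append, List.length_singleton] using ((hlevel s.length).2 s).2

namespace SplittingScheme

variable (S : SplittingScheme le fm)

noncomputable def limHeight : Ordinal := ⨆ n, S.height n

lemma height_lt_limHeight (n : ℕ) : S.height n < S.limHeight :=
  (S.strictMono_height n.lt_succ_self).trans_le (Ordinal.le_iSup S.height (n + 1))

lemma limHeight_lt_omega1 : S.limHeight < omega1 :=
  iSup_lt_omega1 S.height_lt_omega1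

lemma isSuccLimit_limHeight : Order.IsSuccLimit S.limHeight :=
  isSuccLimit_iSup_of_strictMono S.strictMono_height

lemma node_subset_append (hb : IsCofinalBranchName le fm) (s : List Bool) (b : Bool) :
    S.node s ⊆ S.node (s ++ [b]) := by
  refine hb.subset_of_ndom_subset (hb.mono _ _ _ (S.cond_append s b) (S.forces s))
    (S.forces _) ?_
  rw [S.ndom_node, S.ndom_node, List.length_append]
  exact Iio_subset_Iio (S.strictMono_height.monotone (Nat.le_succ _))

lemma node_mono (hb : IsCofinalBranchName le fm) {s t : List Bool} (h : s <+: t) :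
    S.node s ⊆ S.node t := by
  obtain ⟨u, rfl⟩ := h
  induction u using List.reverseRecOn with
  | nil => simp
  | append_singleton u b ih =>
    rw [← List.append_assoc]
    exact ih.trans (S.node_subset_append hb _ b)

lemma not_compat_of_length_eq (hb : IsCofinalBranchName le fm) {s t : List Bool}
    (hlen : s.length = t.length) (hst : s ≠ t) : ¬ Compat (S.node s) (S.node t) := by
  induction s using List.reverseRecOn generalizing t with
  | nil => exact absurd (List.length_eq_zero_iff.1 hlen.symm).symm hst
  | append_singleton s a ih =>
    obtain rfl | ⟨t, b, rfl⟩ := List.eq_nil_or_concat t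
    · simp at hlen
    rw [List.concat_eq_append] at hst ⊢
    by_cases hs : s = t
    · subst hs
      have hab : a ≠ b := by simpa using hst
      cases a <;> cases b
      · exact absurd rfl hab
      · exact S.not_compat_append s
      · exact fun hc => S.not_compat_append s hc.symm
      · exact absurd rfl hab
    · exact not_compat_mono (ih (by simpa using hlen) hs) (S.node_subset_append hb s a)
        (S.node_subset_append hb t b)

lemma isCantorSubtree (hb : IsCofinalBranchName le fm) {T : Set PNode}
    (hval : ∀ p t, fm p t → t ∈ T) : IsCantorSubtree T S.node := by
  refine ⟨fun s => hval _ _ (S.forces s), fun s t => ⟨S.node_mono hb, fun hst => ?_⟩⟩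
  rcases le_or_gt s.length t.length with hlen | hlen
  · rw [List.prefix_iff_eq_take]
    by_contra hne
    exact S.not_compat_of_length_eq hb (by simp [hlen]) hne
      (compat_of_subset hst (S.node_mono hb (List.take_prefix _ _))
        (hb.isNode _ _ (S.forces t)).1)
  · have hdom := ndom_mono hst
    rw [S.ndom_node, S.ndom_node] at hdom
    exact (lt_irrefl _ (mem_Iio.1 (hdom (S.strictMono_height hlen)))).elim

lemma cofinalIn : CofinalIn S.node S.limHeight := by
  intro f β hβ
  obtain ⟨n, hn⟩ := Ordinal.lt_iSup_iff.1 hβ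
  exact ⟨n, by rw [ht_eq_of_ndom_eq (S.ndom_node _), restr_length]; exact hn.le⟩

lemma iUnion_node_restr_eq (hb : IsCofinalBranchName le fm) {g : ℕ → Bool} {r : P}
    {t : PNode} (hr : ∀ n, le r (S.cond (restr g n))) (hft : fm r t)
    (ht : ndom t = Iio S.limHeight) : ⋃ n, S.node (restr g n) = t := by
  have hsub (n : ℕ) : S.node (restr g n) ⊆ t := by
    refine hb.subset_of_ndom_subset (hb.mono _ _ _ (hr n) (S.forces _)) hft ?_
    rw [S.ndom_node, ht, restr_length]
    exact Iio_subset_Iio (S.height_lt_limHeight n).le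
  refine iUnion_eq_of_subset (hb.isNode _ _ hft).1 hsub fun o ho => ?_
  rw [ht] at ho
  obtain ⟨n, hn⟩ := Ordinal.lt_iSup_iff.1 ho
  exact mem_iUnion.2 ⟨n, by rw [S.ndom_node, restr_length]; exact hn⟩

theorem false_of_prunedAt (hb : IsCofinalBranchName le fm)
    (htrans : ∀ p q r, le p q → le q r → le p r) (hclosed : Omega1Closed le)
    {T : Set PNode} (hval : ∀ p t, fm p t → t ∈ T) (hPr : PrunedAt T S.limHeight) : False := by
  obtain ⟨-, g, -, hg⟩ := hPr S.node (S.isCantorSubtree hb hval) S.cofinalIn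
  obtain ⟨q, hq⟩ := hclosed (fun n => S.cond (restr g n)) fun n => by
    simpa only [restr_succ] using S.cond_append (restr g n) (g n)
  obtain ⟨r, hrq, t, hft, ht⟩ := hb.total q _ S.limHeight_lt_omega1
  apply hg
  rw [S.iUnion_node_restr_eq hb (fun n => htrans _ _ _ hrq (hq n)) hft ht]
  exact ⟨hval _ _ hft, ht⟩

end SplittingScheme

end Forcing

/-- A `ℙ₃`-name `ḃ` for a cofinal branch of `T` is represented
by the relation `fm p t` ("`p ⊩ ť ∈ ḃ`"), which takes values in `T`, is monotone,
forces a chain, and densely forces nodes of every countable height. The conclusion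
"`ḃ` is not new" says that below every condition there is a condition `q` deciding the
branch: any two nodes forced by extensions of `q` are compatible, so the branch forced
below `q` is a ground-model branch. -/
theorem omega1Closed_adds_no_new_branch_of_pruned_tree_general
    {P : Type*} (le : P → P → Prop)
    (htrans : ∀ p q r, le p q → le q r → le p r)
    (hclosed : Omega1Closed le)
    (T : Set PNode) (hT : IsOmega1Tree T)
    (hPr : ∀ δ < omega1, Order.IsSuccLimit δ → PrunedAt T δ)
    (fm : P → PNode → Prop)
    (hval : ∀ p t, fm p t → t ∈ T)
    (hmono : ∀ p q t, le q p → fm p t → fm q t)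
    (hchain : ∀ p t t', fm p t → fm p t' → Compat t t')
    (htotal : ∀ p, ∀ δ < omega1, ∃ q, le q p ∧ ∃ t, fm q t ∧ ndom t = Set.Iio δ) :
    ∀ p : P, ∃ q, le q p ∧
      ∀ q₁ q₂ t₁ t₂, le q₁ q → le q₂ q → fm q₁ t₁ → fm q₂ t₂ → Compat t₁ t₂ := by
  have hb : IsCofinalBranchName le fm :=
    ⟨hmono, hchain, htotal, fun p t h => hT.1.1 t (hval p t h)⟩
  intro p
  by_contra hp
  have hsplit : ∀ q, le q p → ¬ Decides le fm q := fun q hq hd => hp ⟨q, hq, hd⟩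
  obtain ⟨S⟩ := exists_splittingScheme hb htrans hsplit
  exact S.false_of_prunedAt hb htrans hclosed hval
    (hPr _ S.limHeight_lt_omega1 S.isSuccLimit_limHeight)

/-- **Claim 8.4 (second half).** In `M[G₁][G₂]`, where `T` is a normal ω₁-tree which is
`lim(ω₁)`-properly pruned and `ℙ₃ = Fn(λ, 2, ω₁)` is ω₁-closed, forcing with `ℙ₃` adds
no new branches to `T`.

Forcing-free formulation: a `ℙ₃`-name `ḃ` for a cofinal branch of `T` is represented
by the relation `fm p t` ("`p ⊩ ť ∈ ḃ`"), which takes values in `T`, is monotone,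
forces a chain, and densely forces nodes of every countable height. The conclusion
"`ḃ` is not new" says that below every condition there is a condition `q` deciding the
branch: any two nodes forced by extensions of `q` are compatible, so the branch forced
below `q` is a ground-model branch. -/
theorem omega1Closed_adds_no_new_branch_of_pruned_tree
    {P : Type*} (le : P → P → Prop)
    (hrefl : ∀ p, le p p) (htrans : ∀ p q r, le p q → le q r → le p r)
    (hclosed : Omega1Closed le)
    (T : Set PNode) (hT : IsOmega1Tree T) (hN : IsNormalTree T)
    (hPr : ∀ δ < omega1, Order.IsSuccLimit δ → PrunedAt T δ)
    (fm : P → PNode → Prop)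
    (hval : ∀ p t, fm p t → t ∈ T)
    (hmono : ∀ p q t, le q p → fm p t → fm q t)
    (hchain : ∀ p t t', fm p t → fm p t' → Compat t t')
    (htotal : ∀ p, ∀ δ < omega1, ∃ q, le q p ∧ ∃ t, fm q t ∧ ndom t = Set.Iio δ) :
    ∀ p : P, ∃ q, le q p ∧
      ∀ q₁ q₂ t₁ t₂, le q₁ q → le q₂ q → fm q₁ t₁ → fm q₂ t₂ → Compat t₁ t₂ :=
  omega1Closed_adds_no_new_branch_of_pruned_tree_general le htrans hclosed T hT hPr fm hval hmono
    hchain htotal
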